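/- arXiv:2202.10209 — 2 statements merged into one kernel-verified Lean document; each statement's English description precedes it below -/
import Mathlib

section
/- If each of n local randomizers R_1,…,R_n provides ε-edge LDP, then the tuple (R_1,…,R_n) applied to the rows of the adjacency matrix of an undirected graph provides 2ε-relationship DP: for any two undirected graphs G, G' on n nodes differing in one edge and any tuple of outputs (s_1,…,s_n), Pr[(R_1(a_1),…,R_n(a_n))=(s_1,…,s_n)] ≤ e^{2ε} Pr[(R_1(a'_1),…,R_n(a'_n))=(s_1,…,s_n)], where a_i, a'_i are the i-th rows of the adjacency matrices of G, G'. -/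
open Real Finset

/-- Two neighbor lists differ in exactly one bit. -/
def DiffOne {n : ℕ} (a a' : Fin n → Bool) : Prop :=
  ∃ j, a j ≠ a' j ∧ ∀ k, k ≠ j → a k = a' k

/-- A local randomizer `R` (given by its output probability mass function)
provides ε-edge LDP. -/
def EdgeLDP {n : ℕ} {S : Type*} (ε : ℝ) (R : (Fin n → Bool) → S → ℝ) : Prop :=
  ∀ a a' : Fin n → Bool, DiffOne a a' → ∀ s : S, R a s ≤ exp ε * R a' s

/-- An adjacency matrix of an undirected graph: symmetric with zero diagonal. -/
def IsUndirectedAdj {n : ℕ} (A : Fin n → Fin n → Bool) : Prop :=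
  (∀ i j, A i j = A j i) ∧ (∀ i, A i i = false)

/-- `A` and `A'` differ in exactly one (undirected) edge. -/
def DiffOneEdge {n : ℕ} (A A' : Fin n → Fin n → Bool) : Prop :=
  ∃ i j, i ≠ j ∧ A i j ≠ A' i j ∧
    ∀ k l, (k, l) ≠ (i, j) → (k, l) ≠ (j, i) → A k l = A' k l

/-! An edge flip `{i, j}` changes exactly the bit `j` of row `i` and the bit `i` of row `j`, so
only the two randomizers `R i` and `R j` see different inputs; each of them contributes a
factor `e^ε` by edge LDP, while all other factors of the product are unchanged. -/

theorem Finset.prod_le_pow_card_mul_prod {ι R : Type*} [Fintype ι] [CommSemiring R]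
    [PartialOrder R] [IsOrderedRing R] (T : Finset ι) {c : R} {f g : ι → R}
    (hf : ∀ i, 0 ≤ f i) (hT : ∀ i ∈ T, f i ≤ c * g i) (hTc : ∀ i ∉ T, f i = g i) :
    ∏ i, f i ≤ c ^ T.card * ∏ i, g i := by
  classical
  calc ∏ i, f i ≤ ∏ i, (if i ∈ T then c else 1) * g i := by
        refine Finset.prod_le_prod (fun i _ => hf i) fun i _ => ?_
        by_cases hi : i ∈ T
        · simpa [hi] using hT i hi
        · simp [hi, hTc i hi]
    _ = c ^ T.card * ∏ i, g i := by
        rw [Finset.prod_mul_distrib, Finset.prod_ite_mem, Finset.univ_inter, Finset.prod_const]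

namespace DiffOneEdge

variable {n : ℕ} {A A' : Fin n → Fin n → Bool}

theorem exists_diffOne_rows (hA : ∀ k l, A k l = A l k) (hA' : ∀ k l, A' k l = A' l k)
    (hdiff : DiffOneEdge A A') :
    ∃ i j, i ≠ j ∧ DiffOne (A i) (A' i) ∧ DiffOne (A j) (A' j) ∧
      ∀ k, k ≠ i → k ≠ j → A k = A' k := by
  obtain ⟨i, j, hij, hne, hoth⟩ := hdiff
  refine ⟨i, j, hij, ⟨j, hne, fun l hl => ?_⟩, ⟨i, ?_, fun l hl => ?_⟩, fun k hki hkj => ?_⟩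
  · exact hoth i l (by simp [hl]) (by simp [hij])
  · rwa [hA j i, hA' j i]
  · exact hoth j l (by simp [Ne.symm hij]) (by simp [hl])
  · funext l
    exact hoth k l (by simp [hki]) (by simp [hkj])

end DiffOneEdge

theorem stmt_1_general {n : ℕ} {S : Fin n → Type*} (ε : ℝ)
    (R : ∀ i : Fin n, (Fin n → Bool) → S i → ℝ)
    (hnonneg : ∀ i a s, 0 ≤ R i a s)
    (hLDP : ∀ i, EdgeLDP ε (R i))
    (A A' : Fin n → Fin n → Bool)
    (hA : IsUndirectedAdj A) (hA' : IsUndirectedAdj A')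
    (hdiff : DiffOneEdge A A')
    (s : ∀ i, S i) :
    ∏ i : Fin n, R i (A i) (s i) ≤ exp (2 * ε) * ∏ i : Fin n, R i (A' i) (s i) := by
  obtain ⟨i, j, hij, hrow_i, hrow_j, hrows⟩ := hdiff.exists_diffOne_rows hA.1 hA'.1
  have hflipped : ∀ k ∈ ({i, j} : Finset (Fin n)),
      R k (A k) (s k) ≤ exp ε * R k (A' k) (s k) := by
    simp only [Finset.mem_insert, Finset.mem_singleton]
    rintro k (rfl | rfl)
    exacts [hLDP k _ _ hrow_i (s k), hLDP k _ _ hrow_j (s k)]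
  have hkept : ∀ k ∉ ({i, j} : Finset (Fin n)), R k (A k) (s k) = R k (A' k) (s k) := by
    intro k hk
    simp only [Finset.mem_insert, Finset.mem_singleton, not_or] at hk
    rw [hrows k hk.1 hk.2]
  have hbound := Finset.prod_le_pow_card_mul_prod _ (fun k => hnonneg k _ _) hflipped hkept
  rwa [Finset.card_pair hij, ← Real.exp_nat_mul, Nat.cast_ofNat] at hbound

/-- If each local randomizer provides ε-edge LDP, then the tuple applied to the
rows of the adjacency matrix of an undirected graph provides 2ε-relationship DP. -/
theorem stmt_1 {n : ℕ} {S : Fin n → Type*} (ε : ℝ) (hε : 0 ≤ ε)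
    (R : ∀ i : Fin n, (Fin n → Bool) → S i → ℝ)
    (hnonneg : ∀ i a s, 0 ≤ R i a s)
    (hLDP : ∀ i, EdgeLDP ε (R i))
    (A A' : Fin n → Fin n → Bool)
    (hA : IsUndirectedAdj A) (hA' : IsUndirectedAdj A')
    (hdiff : DiffOneEdge A A')
    (s : ∀ i, S i) :
    ∏ i : Fin n, R i (A i) (s i) ≤ exp (2 * ε) * ∏ i : Fin n, R i (A' i) (s i) :=
  stmt_1_general ε R hnonneg hLDP A A' hA hA' hdiff s
end

section
/- For the DPRR output distribution in (single-edge form): for each off-diagonal coordinate j, Pr[output bit = 1] = p·q if a_j = 1 and (1−p)·q if a_j = 0; consequently, for any fixed q ∈ (0,1] and p = e^{ε₂}/(e^{ε₂}+1), the per-bit likelihood ratio between inputs a_j = 1 and a_j = 0 satisfies max(pq/((1−p)q), (1−pq)/(1−(1−p)q)) ≤ e^{ε₂}. -/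
open Real

/-!
The odds `p / (1 - p)` of `p = e / (e + 1)` are exactly `e`. The ratio for an output `1` is
these odds, as `q` cancels; the ratio for an output `0` is at most the odds because `p ≥ 1/2`,
which is where `ε₂ ≥ 0` enters.
-/

section RandomizedResponse

variable {K : Type*} [Field K]

theorem div_add_one_div_one_sub_div_add_one {e : K} (he : e + 1 ≠ 0) :
    e / (e + 1) / (1 - e / (e + 1)) = e := by
  rw [one_sub_div he, add_sub_cancel_left, div_div_div_cancel_right₀ he, div_one]

variable [LinearOrder K] [IsStrictOrderedRing K]

theorem one_half_le_div_add_one {e : K} (he : 1 ≤ e) : 1 / 2 ≤ e / (e + 1) := by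
  rw [div_le_div_iff₀ two_pos (by linarith)]
  linarith

theorem div_add_one_lt_one {e : K} (he : 0 ≤ e) : e / (e + 1) < 1 :=
  (div_lt_one (by linarith)).2 (lt_add_one e)

/-- After clearing denominators the `q`-terms cancel and what remains is `1 - p ≤ p`. -/
theorem one_sub_mul_div_one_sub_mul_le {p q : K} (hp : 1 / 2 ≤ p) (hp1 : p < 1) (hq : q ≤ 1) :
    (1 - p * q) / (1 - (1 - p) * q) ≤ p / (1 - p) := by
  have hden : 0 < 1 - (1 - p) * q := by nlinarith
  rw [div_le_div_iff₀ hden (sub_pos.2 hp1)]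
  nlinarith

end RandomizedResponse

/-- Per-bit DPRR output distribution and likelihood-ratio bound: with
p = e^{ε₂}/(e^{ε₂}+1) and sampling probability q ∈ (0,1], the probability of
an output 1 is p·q on input bit 1 and (1−p)·q on input bit 0, and both
per-bit likelihood ratios pq/((1−p)q) and (1−pq)/(1−(1−p)q) are at most
e^{ε₂}. -/
theorem stmt_17 (ε₂ : ℝ) (hε₂ : 0 ≤ ε₂) (q : ℝ) (hq : 0 < q ∧ q ≤ 1)
    (p : ℝ) (hp : p = exp ε₂ / (exp ε₂ + 1)) :
    ((fun aj : Bool => (if aj then p else 1 - p) * q) true = p * q) ∧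
    ((fun aj : Bool => (if aj then p else 1 - p) * q) false = (1 - p) * q) ∧
    (p * q) / ((1 - p) * q) ≤ exp ε₂ ∧
    (1 - p * q) / (1 - (1 - p) * q) ≤ exp ε₂ := by
  obtain ⟨hq0, hq1⟩ := hq
  have he : 1 ≤ exp ε₂ := one_le_exp hε₂
  have hodds : p / (1 - p) = exp ε₂ := hp ▸ div_add_one_div_one_sub_div_add_one (by positivity)
  refine ⟨rfl, rfl, ?_, ?_⟩
  · rw [mul_div_mul_right _ _ hq0.ne', hodds]
  · rw [← hodds]
    refine one_sub_mul_div_one_sub_mul_le ?_ ?_ hq1 <;> rw [hp]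
    · exact one_half_le_div_add_one he
    · exact div_add_one_lt_one (exp_nonneg ε₂)
end
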